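/- arXiv:1207.5712 — 10 statements merged into one kernel-verified Lean document; each statement's English description precedes it below -/
import Mathlib

section
/- Let G be the simple graph on vertex set {1,...,7} with edge set E = {{1,2},{1,7},{2,3},{2,4},{2,7},{3,7},{4,5},{4,6},{5,6},{6,7}} (the graph G706 of the atlas). Then msr(G) = 5; that is, there exists a 7×7 Hermitian positive semidefinite complex matrix with graph G of rank 5, and every 7×7 Hermitian positive semidefinite complex matrix with graph G has rank at least 5. -/
/-!
Write `M` as the Gram matrix of vectors `u₁, …, u₇` (vertex `k` is the index `k - 1 : Fin 7`).
A vector lies outside the span of earlier ones as soon as some `w` is orthogonal to all earlier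
ones but not to it. This adds `u₁` (with `w = u₂`), then `u₃` (`w = u₃`, as `u₃ ⊥ u₁`), then `u₂`
(`w = u₄`); likewise `u₅` (`w = u₄`), then `u₆` (`w = u₇`). No edge joins `{1, 2, 3}` to
`{5, 6}`, so the two spans are orthogonal and the five vectors are independent, whence
`rank M ≥ 5`. Equality is attained by the Gram matrix of the columns of `orthRepG706`, seven
vectors in `ℂ⁵`.
-/

open Matrix ComplexOrder

/-- The edge set of the graph G706 on vertices 1,...,7. -/
def edgesG706 : Set (Sym2 ℕ) :=
  {s(1, 2), s(1, 7), s(2, 3), s(2, 4), s(2, 7), s(3, 7), s(4, 5), s(4, 6), s(5, 6), s(6, 7)}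

/-- `M` has graph G706: for `i ≠ j`, `M i j ≠ 0` iff `{i+1, j+1}` is an edge of G706. -/
def HasGraphG706 (M : Matrix (Fin 7) (Fin 7) ℂ) : Prop :=
  ∀ i j : Fin 7, i ≠ j → (M i j ≠ 0 ↔ s((i : ℕ) + 1, (j : ℕ) + 1) ∈ edgesG706)

open scoped InnerProductSpace

section InnerProductSpace

variable {𝕜 E : Type*} [RCLike 𝕜] [NormedAddCommGroup E] [InnerProductSpace 𝕜 E]

theorem LinearIndependent.finCons_of_inner_ne_zero {n : ℕ} {v : Fin n → E}
    (hv : LinearIndependent 𝕜 v) {x w : E} (hw : ∀ i, ⟪w, v i⟫_𝕜 = 0) (hx : ⟪w, x⟫_𝕜 ≠ 0) :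
    LinearIndependent 𝕜 (Fin.cons x v : Fin (n + 1) → E) := by
  refine hv.finCons fun hmem => hx ?_
  have hspan : Submodule.span 𝕜 (Set.range v) ≤ (𝕜 ∙ w)ᗮ := by
    rw [Submodule.span_le]
    rintro _ ⟨i, rfl⟩
    exact Submodule.mem_orthogonal_singleton_iff_inner_right.2 (hw i)
  exact Submodule.mem_orthogonal_singleton_iff_inner_right.1 (hspan hmem)

theorem LinearIndependent.sum_type_of_inner_eq_zero {ι ι' : Type*} {v : ι → E} {v' : ι' → E}
    (hv : LinearIndependent 𝕜 v) (hv' : LinearIndependent 𝕜 v')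
    (h : ∀ i j, ⟪v i, v' j⟫_𝕜 = 0) : LinearIndependent 𝕜 (Sum.elim v v') :=
  hv.sum_type hv' <| Submodule.IsOrtho.disjoint <| Submodule.isOrtho_span.2 <| by
    rintro _ ⟨i, rfl⟩ _ ⟨j, rfl⟩
    exact h i j

end InnerProductSpace

namespace Matrix

variable {𝕜 n : Type*} [RCLike 𝕜] [Fintype n]

open scoped MatrixOrder in
theorem PosSemidef.exists_eq_gram [DecidableEq n] {M : Matrix n n 𝕜} (hM : M.PosSemidef) :
    ∃ v : n → EuclideanSpace 𝕜 n, M = gram 𝕜 v := by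
  obtain ⟨B, rfl⟩ := CStarAlgebra.nonneg_iff_eq_star_mul_self.mp hM.nonneg
  refine ⟨fun j => WithLp.toLp 2 (B.col j), ?_⟩
  ext i j
  simp [mul_apply, PiLp.inner_apply, mul_comm]

theorem card_le_rank_gram_of_linearIndependent {E ι : Type*} [NormedAddCommGroup E]
    [InnerProductSpace 𝕜 E] [Fintype ι] [DecidableEq ι] {v : n → E} {s : ι → n}
    (hs : LinearIndependent 𝕜 (v ∘ s)) :
    Fintype.card ι ≤ (gram 𝕜 v).rank := by
  have hsub : (gram 𝕜 (v ∘ s)).rank = Fintype.card ι :=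
    rank_of_isUnit _ (posDef_gram_of_linearIndependent hs).isUnit
  have hgram : (gram 𝕜 v).submatrix s s = gram 𝕜 (v ∘ s) := rfl
  rw [← hsub, ← hgram]
  exact rank_submatrix_le _ s s

end Matrix

theorem HasGraphG706.apply_eq_zero_iff {M : Matrix (Fin 7) (Fin 7) ℂ} (hG : HasGraphG706 M)
    {i j : Fin 7} (hij : i ≠ j) : M i j = 0 ↔ s((i : ℕ) + 1, (j : ℕ) + 1) ∉ edgesG706 := by
  rw [← hG i j hij, not_not]

theorem HasGraphG706.linearIndependent_gram {E : Type*} [NormedAddCommGroup E]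
    [InnerProductSpace ℂ E] {u : Fin 7 → E} (hG : HasGraphG706 (gram ℂ u)) :
    LinearIndependent ℂ (u ∘ Sum.elim ![1, 2, 0] ![5, 4]) := by
  have hu (i j : Fin 7) (hij : i ≠ j) :
      ⟪u i, u j⟫_ℂ = 0 ↔ s((i : ℕ) + 1, (j : ℕ) + 1) ∉ edgesG706 :=
    hG.apply_eq_zero_iff hij
  have hu2 : u 2 ≠ 0 := fun h => (by simp [hu, edgesG706] : ⟪u 1, u 2⟫_ℂ ≠ 0) (by simp [h])
  have h0 : LinearIndependent ℂ ![u 0] :=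
    linearIndependent_empty_type.finCons_of_inner_ne_zero (w := u 1) finZeroElim
      (by simp [hu, edgesG706])
  have h20 : LinearIndependent ℂ ![u 2, u 0] :=
    h0.finCons_of_inner_ne_zero (w := u 2) (by simp [hu, edgesG706]) (inner_self_ne_zero.2 hu2)
  have h120 : LinearIndependent ℂ ![u 1, u 2, u 0] :=
    h20.finCons_of_inner_ne_zero (w := u 3) (by simp [Fin.forall_fin_two, hu, edgesG706])
      (by simp [hu, edgesG706])
  have h4 : LinearIndependent ℂ ![u 4] :=
    linearIndependent_empty_type.finCons_of_inner_ne_zero (w := u 3) finZeroElim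
      (by simp [hu, edgesG706])
  have h54 : LinearIndependent ℂ ![u 5, u 4] :=
    h4.finCons_of_inner_ne_zero (w := u 6) (by simp [hu, edgesG706]) (by simp [hu, edgesG706])
  have hfamily : u ∘ Sum.elim ![1, 2, 0] ![5, 4] = Sum.elim ![u 1, u 2, u 0] ![u 5, u 4] := by
    ext (i | i) <;> fin_cases i <;> rfl
  rw [hfamily]
  exact h120.sum_type_of_inner_eq_zero h54 (by simp [Fin.forall_fin_succ, hu, edgesG706])

theorem HasGraphG706.five_le_rank {M : Matrix (Fin 7) (Fin 7) ℂ} (hG : HasGraphG706 M)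
    (hM : M.PosSemidef) : 5 ≤ M.rank := by
  obtain ⟨u, rfl⟩ := hM.exists_eq_gram
  simpa using card_le_rank_gram_of_linearIndependent hG.linearIndependent_gram

def orthRepG706 : Matrix (Fin 5) (Fin 7) ℂ :=
  !![1, 1, 0, 0, 0, 0, 1;
     0, 1, 1, 0, 0, 0, 1;
     0, 0, 0, 1, 1, 1, 0;
     0, 0, 0, 1, 0, 1, 1;
     0, 1, 0, 1, 0, 0, -1]

theorem hasGraphG706_orthRepG706 : HasGraphG706 (orthRepG706ᴴ * orthRepG706) := by
  intro i j hij
  fin_cases i <;> fin_cases j <;>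
    simp [orthRepG706, mul_apply, Fin.sum_univ_five, edgesG706] at hij ⊢

/-- msr(G706) = 5. -/
theorem msr_G706 :
    (∃ M : Matrix (Fin 7) (Fin 7) ℂ, M.PosSemidef ∧ HasGraphG706 M ∧ M.rank = 5) ∧
    (∀ M : Matrix (Fin 7) (Fin 7) ℂ, M.PosSemidef → HasGraphG706 M → 5 ≤ M.rank) := by
  have hpsd := posSemidef_conjTranspose_mul_self orthRepG706
  have hrank : (orthRepG706ᴴ * orthRepG706).rank ≤ 5 :=
    (rank_mul_le_right _ _).trans orthRepG706.rank_le_height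
  exact ⟨⟨_, hpsd, hasGraphG706_orthRepG706,
      le_antisymm hrank (hasGraphG706_orthRepG706.five_le_rank hpsd)⟩,
    fun M hM hG => hG.five_le_rank hM⟩
end

section
/- Let G be the simple graph on vertex set {1,...,7} with edge set E = {{1,2},{1,6},{2,3},{2,6},{2,7},{3,4},{3,5},{3,7},{4,5},{5,6},{5,7},{6,7}} (the graph G946 of the atlas). Then msr(G) = 4; that is, there exists a 7×7 Hermitian positive semidefinite complex matrix with graph G of rank 4, and every 7×7 Hermitian positive semidefinite complex matrix with graph G has rank at least 4. -/
/-!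
Every matrix with graph G946 has rank at least 4 because the vertices 1, 2, 7, 5, 4 induce a path:
when a matrix restricted to rows and columns `p 0, …, p n` has the zero pattern of a path, its
block with rows `p 0, …, p (n-1)` and columns `p 1, …, p n` is lower triangular with nonzero
diagonal.

Rank 4 is attained by the Gram matrix of seven integer vectors in `ℂ⁴` forming an orthogonal
representation of G946: vectors of adjacent vertices are not orthogonal, those of distinct
nonadjacent vertices are.
-/

open Matrix ComplexOrder

/-- The edge set of the graph G946 on vertices 1,...,7. -/
def edgesG946 : Set (Sym2 ℕ) :=
  {s(1, 2), s(1, 6), s(2, 3), s(2, 6), s(2, 7), s(3, 4), s(3, 5), s(3, 7), s(4, 5), s(5, 6), s(5, 7), s(6, 7)}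

/-- `M` has graph G946: for `i ≠ j`, `M i j ≠ 0` iff `{i+1, j+1}` is an edge of G946. -/
def HasGraphG946 (M : Matrix (Fin 7) (Fin 7) ℂ) : Prop :=
  ∀ i j : Fin 7, i ≠ j → (M i j ≠ 0 ↔ s((i : ℕ) + 1, (j : ℕ) + 1) ∈ edgesG946)

instance : DecidablePred (· ∈ edgesG946) := fun _ => by unfold edgesG946; infer_instance

theorem Matrix.le_rank_of_path {R ι : Type*} [CommRing R] [IsDomain R] [Fintype ι] {n : ℕ}
    (M : Matrix ι ι R) (p : Fin (n + 1) → ι)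
    (hadj : ∀ i : Fin n, M (p i.castSucc) (p i.succ) ≠ 0)
    (hnonadj : ∀ i j : Fin (n + 1), i.val + 1 < j.val → M (p i) (p j) = 0) :
    n ≤ M.rank := by
  set T := M.submatrix (p ∘ Fin.castSucc) (p ∘ Fin.succ)
  have hT : T.IsLowerTriangular := fun i j hij => hnonadj _ _ (by simpa using hij)
  have hdet : T.det ≠ 0 := by
    rw [det_of_isLowerTriangular T hT]
    exact Finset.prod_ne_zero_iff.mpr fun i _ => hadj i
  calc n = T.rank := by rw [rank_of_det_ne_zero hdet, Fintype.card_fin]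
    _ ≤ M.rank := rank_submatrix_le _ _ _

theorem HasGraphG946.four_le_rank {M : Matrix (Fin 7) (Fin 7) ℂ} (hM : HasGraphG946 M) :
    4 ≤ M.rank := by
  let p : Fin 5 → Fin 7 := ![0, 1, 6, 4, 3]
  have hpath : ∀ i : Fin 4, p i.castSucc ≠ p i.succ ∧
      s((p i.castSucc : ℕ) + 1, (p i.succ : ℕ) + 1) ∈ edgesG946 := by decide
  have hinduced : ∀ i j : Fin 5, i.val + 1 < j.val → p i ≠ p j ∧
      s((p i : ℕ) + 1, (p j : ℕ) + 1) ∉ edgesG946 := by decide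
  refine M.le_rank_of_path p (fun i => ?_) (fun i j hij => ?_)
  · obtain ⟨hne, hedge⟩ := hpath i
    exact (hM _ _ hne).2 hedge
  · obtain ⟨hne, hnonedge⟩ := hinduced i j hij
    exact not_not.mp (mt (hM _ _ hne).1 hnonedge)

def gramFactorG946 : Matrix (Fin 4) (Fin 7) ℤ :=
  !![1, 1, 0, 0, 0, 1, 0;
     0, 0, 1, 1, 1, 0, 0;
     0, 1, 1, 0, 2, 0, 1;
     0, -2, 0, 0, 1, 1, 1]

theorem hasGraphG946_gram :
    HasGraphG946 ((gramFactorG946ᵀ * gramFactorG946).map (Int.castRingHom ℂ)) := by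
  simp only [HasGraphG946, map_apply, eq_intCast, ne_eq, Int.cast_eq_zero]
  decide

/-- msr(G946) = 4. -/
theorem msr_G946 :
    (∃ M : Matrix (Fin 7) (Fin 7) ℂ, M.PosSemidef ∧ HasGraphG946 M ∧ M.rank = 4) ∧
    (∀ M : Matrix (Fin 7) (Fin 7) ℂ, M.PosSemidef → HasGraphG946 M → 4 ≤ M.rank) := by
  set B := gramFactorG946.map (Int.castRingHom ℂ)
  have hgram : Bᴴ * B = (gramFactorG946ᵀ * gramFactorG946).map (Int.castRingHom ℂ) := by
    rw [Matrix.map_mul]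
    congr 1
    ext i j
    simp [B]
  have hG : HasGraphG946 (Bᴴ * B) := hgram ▸ hasGraphG946_gram
  refine ⟨⟨Bᴴ * B, posSemidef_conjTranspose_mul_self B, hG, le_antisymm ?_ hG.four_le_rank⟩,
    fun M _ hM => hM.four_le_rank⟩
  calc (Bᴴ * B).rank ≤ B.rank := rank_mul_le_right _ _
    _ ≤ 4 := by simpa using B.rank_le_card_height
end

section
/- Let G be the simple graph on vertex set {1,...,7} with edge set E = {{1,2},{1,5},{1,7},{2,3},{2,5},{2,7},{3,4},{3,6},{3,7},{4,6},{4,7},{5,6}} (the graph G998 of the atlas). Then msr(G) = 4; that is, there exists a 7×7 Hermitian positive semidefinite complex matrix with graph G of rank 4, and every 7×7 Hermitian positive semidefinite complex matrix with graph G has rank at least 4. -/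
/-!
The vertices 1, 5, 3, 4 induce two disjoint edges {1,5} and {3,4}, so the principal 4×4
submatrix of `M` on them is block diagonal with two 2×2 blocks. Each block is nonsingular:
vertex 7 is adjacent to 1 but not to 5, and if the block on {1,5} were singular, the
nonnegative 3×3 principal minor on {7,1,5} would force `M₅₅ = 0` and then `M₁₅ = 0`; the
block on {3,4} is handled in the same way by vertex 2. Hence `rank M ≥ 4`. Conversely, the
Gram matrix of seven suitable integer vectors in ℤ⁴ has graph G998 and rank at most 4.
-/

open Matrix ComplexOrder

/-- The edge set of the graph G998 on vertices 1,...,7. -/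
def edgesG998 : Set (Sym2 ℕ) :=
  {s(1, 2), s(1, 5), s(1, 7), s(2, 3), s(2, 5), s(2, 7), s(3, 4), s(3, 6), s(3, 7), s(4, 6), s(4, 7), s(5, 6)}

/-- `M` has graph G998: for `i ≠ j`, `M i j ≠ 0` iff `{i+1, j+1}` is an edge of G998. -/
def HasGraphG998 (M : Matrix (Fin 7) (Fin 7) ℂ) : Prop :=
  ∀ i j : Fin 7, i ≠ j → (M i j ≠ 0 ↔ s((i : ℕ) + 1, (j : ℕ) + 1) ∈ edgesG998)

theorem Matrix.card_le_rank_of_det_submatrix_ne_zero {K m n k : Type*} [Field K] [Fintype n]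
    [Fintype k] [DecidableEq k] (A : Matrix m n K) (r : k → m) (c : k → n)
    (h : (A.submatrix r c).det ≠ 0) : Fintype.card k ≤ A.rank :=
  rank_of_det_ne_zero h ▸ A.rank_submatrix_le r c

theorem Matrix.IsHermitian.apply_mul_apply_swap {n : Type*} {M : Matrix n n ℂ}
    (hM : M.IsHermitian) (i j : n) : M i j * M j i = Complex.normSq (M i j) := by
  rw [← hM.apply j i]
  exact Complex.mul_conj _

theorem Matrix.PosSemidef.det_submatrix_pair_ne_zero {n : Type*} [Fintype n] [DecidableEq n]
    {M : Matrix n n ℂ} (hM : M.PosSemidef) {a b c : n} (hca : M c a ≠ 0) (hcb : M c b = 0)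
    (hab : M a b ≠ 0) : (M.submatrix ![a, b] ![a, b]).det ≠ 0 := by
  have hbc : M b c = 0 := by rw [← hM.isHermitian.apply, hcb, star_zero]
  have hdet := (hM.submatrix ![c, a, b]).det_nonneg
  rw [det_fin_three] at hdet
  simp only [submatrix_apply, cons_val_zero, cons_val_one, cons_val_two, Nat.succ_eq_add_one,
    Nat.reduceAdd, tail_cons, head_cons, hcb, hbc] at hdet
  rw [det_fin_two]
  simp only [submatrix_apply, cons_val_zero, cons_val_one]
  intro hminor
  have hbb : M b b = 0 := by
    -- the principal minor on `{c, a, b}` is `M c c * (minor on {a, b}) - |M c a|² * M b b`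
    have hprod : (Complex.normSq (M c a) : ℂ) * M b b = 0 := by
      refine le_antisymm ?_ (mul_nonneg (by exact_mod_cast Complex.normSq_nonneg _) hM.diag_nonneg)
      convert neg_nonpos.2 hdet using 1
      linear_combination M c c * hminor - M b b * hM.isHermitian.apply_mul_apply_swap c a
    exact (mul_eq_zero.1 hprod).resolve_left (by exact_mod_cast (Complex.normSq_pos.2 hca).ne')
  rw [hbb, mul_zero, zero_sub, neg_eq_zero, hM.isHermitian.apply_mul_apply_swap] at hminor
  exact hab (Complex.normSq_eq_zero.1 (by exact_mod_cast hminor))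

namespace HasGraphG998

variable {M : Matrix (Fin 7) (Fin 7) ℂ}

theorem apply_eq_zero (hG : HasGraphG998 M) {i j : Fin 7} (hij : i ≠ j)
    (h : s((i : ℕ) + 1, (j : ℕ) + 1) ∉ edgesG998) : M i j = 0 :=
  not_not.1 fun hM => h ((hG i j hij).1 hM)

theorem apply_ne_zero (hG : HasGraphG998 M) {i j : Fin 7} (hij : i ≠ j)
    (h : s((i : ℕ) + 1, (j : ℕ) + 1) ∈ edgesG998) : M i j ≠ 0 :=
  (hG i j hij).2 h

-- Index `i : Fin 7` is vertex `i + 1`: the blocks are the edges {1,5} and {3,4}.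
theorem submatrix_eq_fromBlocks (hG : HasGraphG998 M) :
    M.submatrix (Sum.elim ![0, 4] ![2, 3]) (Sum.elim ![0, 4] ![2, 3]) =
      fromBlocks (M.submatrix ![0, 4] ![0, 4]) 0 0 (M.submatrix ![2, 3] ![2, 3]) := by
  ext (i | i) (j | j) <;> fin_cases i <;> fin_cases j <;>
    first | rfl | exact hG.apply_eq_zero (by decide) (by simp [edgesG998])

theorem four_le_rank (hP : M.PosSemidef) (hG : HasGraphG998 M) : 4 ≤ M.rank := by
  have h15 : (M.submatrix ![0, 4] ![0, 4]).det ≠ 0 :=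
    hP.det_submatrix_pair_ne_zero (c := 6) (hG.apply_ne_zero (by decide) (by simp [edgesG998]))
      (hG.apply_eq_zero (by decide) (by simp [edgesG998]))
      (hG.apply_ne_zero (by decide) (by simp [edgesG998]))
  have h34 : (M.submatrix ![2, 3] ![2, 3]).det ≠ 0 :=
    hP.det_submatrix_pair_ne_zero (c := 1) (hG.apply_ne_zero (by decide) (by simp [edgesG998]))
      (hG.apply_eq_zero (by decide) (by simp [edgesG998]))
      (hG.apply_ne_zero (by decide) (by simp [edgesG998]))
  have hdet := M.card_le_rank_of_det_submatrix_ne_zero _ _ <| by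
    rw [hG.submatrix_eq_fromBlocks, det_fromBlocks_zero₂₁]
    exact mul_ne_zero h15 h34
  simpa using hdet

end HasGraphG998

def witnessFactor : Matrix (Fin 4) (Fin 7) ℤ :=
  !![0, 0, 1, 1, 0, 1, 2; 1, 1, 0, 0, 1, 0, 3; 0, 1, 0, 0, 1, 1, -3; 0, -1, 1, 0, 0, 1, 1]

noncomputable def witness : Matrix (Fin 7) (Fin 7) ℂ :=
  (witnessFactorᵀ * witnessFactor).map Int.cast

theorem witness_eq_conjTranspose_mul_self :
    witness =
      (witnessFactor.map (Int.cast : ℤ → ℂ))ᴴ * witnessFactor.map (Int.cast : ℤ → ℂ) := by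
  ext i j
  simp [witness, mul_apply]

theorem posSemidef_witness : witness.PosSemidef :=
  witness_eq_conjTranspose_mul_self ▸ posSemidef_conjTranspose_mul_self _

theorem rank_witness_le : witness.rank ≤ 4 := by
  rw [witness_eq_conjTranspose_mul_self, rank_conjTranspose_mul_self]
  exact rank_le_height _

theorem hasGraphG998_witness : HasGraphG998 witness := by
  intro i j hij
  simp only [witness, map_apply, ne_eq, Int.cast_eq_zero, edgesG998, Set.mem_insert_iff,
    Set.mem_singleton_iff]
  revert i j hij
  decide

/-- msr(G998) = 4. -/
theorem msr_G998 :
    (∃ M : Matrix (Fin 7) (Fin 7) ℂ, M.PosSemidef ∧ HasGraphG998 M ∧ M.rank = 4) ∧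
    (∀ M : Matrix (Fin 7) (Fin 7) ℂ, M.PosSemidef → HasGraphG998 M → 4 ≤ M.rank) :=
  ⟨⟨witness, posSemidef_witness, hasGraphG998_witness, rank_witness_le.antisymm <|
      HasGraphG998.four_le_rank posSemidef_witness hasGraphG998_witness⟩,
    fun _ => HasGraphG998.four_le_rank⟩
end

section
/- Let G be the simple graph on vertex set {1,...,7} with edge set E = {{1,2},{1,5},{1,6},{1,7},{2,3},{2,5},{2,6},{2,7},{3,4},{3,5},{3,6},{4,5},{4,6}} (the graph G1069 of the atlas). Then msr(G) = 4; that is, there exists a 7×7 Hermitian positive semidefinite complex matrix with graph G of rank 4, and every 7×7 Hermitian positive semidefinite complex matrix with graph G has rank at least 4. -/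
open Matrix ComplexOrder

/-- The edge set of the graph G1069 on vertices 1,...,7. -/
def edgesG1069 : Set (Sym2 ℕ) :=
  {s(1, 2), s(1, 5), s(1, 6), s(1, 7), s(2, 3), s(2, 5), s(2, 6), s(2, 7), s(3, 4), s(3, 5), s(3, 6), s(4, 5), s(4, 6)}

/-- `M` has graph G1069: for `i ≠ j`, `M i j ≠ 0` iff `{i+1, j+1}` is an edge of G1069. -/
def HasGraphG1069 (M : Matrix (Fin 7) (Fin 7) ℂ) : Prop :=
  ∀ i j : Fin 7, i ≠ j → (M i j ≠ 0 ↔ s((i : ℕ) + 1, (j : ℕ) + 1) ∈ edgesG1069)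


/-!
The upper bound is witnessed by the Gram matrix of seven vectors in `ℂ⁴`, the columns of an
integer `4 × 7` matrix; its graph is checked by evaluation over `ℤ`.

For the lower bound, rows `3, 2, 1, 7` and columns `4, 3, 5, 7` of any matrix with graph G1069
(indices `2, 1, 0, 6` and `3, 2, 4, 6` in `Fin 7`) form an upper triangular `4 × 4` submatrix,
because the six entries below its diagonal are non-edges. Its diagonal entries `m₃₄, m₂₃, m₁₅`
are edges, and `m₇₇ ≠ 0` because vertex 7 is not isolated and a positive semidefinite matrix
with a zero diagonal entry has a zero column.
-/

theorem Matrix.card_le_rank_of_isUpperTriangular_submatrix {K m n ι : Type*} [Field K]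
    [Fintype n] [Fintype ι] [LinearOrder ι] (A : Matrix m n K) (r : ι → m) (c : ι → n)
    (htri : (A.submatrix r c).IsUpperTriangular) (hdiag : ∀ i, A (r i) (c i) ≠ 0) :
    Fintype.card ι ≤ A.rank := by
  classical
  have hdet : (A.submatrix r c).det ≠ 0 := by
    rw [det_of_isUpperTriangular htri]
    exact Finset.prod_ne_zero_iff.mpr fun i _ ↦ hdiag i
  calc Fintype.card ι = (A.submatrix r c).rank :=
        (rank_of_isUnit _ ((isUnit_iff_isUnit_det _).mpr hdet.isUnit)).symm
    _ ≤ A.rank := rank_submatrix_le A r c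

theorem Matrix.PosSemidef.diag_ne_zero_of_ne_zero {𝕜 n : Type*} [RCLike 𝕜] [Fintype n]
    {A : Matrix n n 𝕜} (hA : A.PosSemidef) {i j : n} (h : A j i ≠ 0) : A i i ≠ 0 := by
  classical
  intro hii
  have hcol : A *ᵥ Pi.single i 1 = 0 :=
    (hA.dotProduct_mulVec_zero_iff (Pi.single i 1)).mp (by simp [hii])
  exact h (by simpa using congrFun hcol j)

theorem Matrix.conjTranspose_map_intCast_mul_self {R m n : Type*} [Ring R] [StarRing R]
    [Fintype m] (A : Matrix m n ℤ) :
    (A.map (Int.cast : ℤ → R))ᴴ * A.map (Int.cast : ℤ → R) = (Aᵀ * A).map (Int.cast : ℤ → R) := by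
  ext i j
  simp [mul_apply, conjTranspose_apply]

instance : DecidablePred (· ∈ edgesG1069) := fun s ↦
  decidable_of_iff (s ∈ [s(1, 2), s(1, 5), s(1, 6), s(1, 7), s(2, 3), s(2, 5), s(2, 6), s(2, 7),
    s(3, 4), s(3, 5), s(3, 6), s(4, 5), s(4, 6)]) (by simp [edgesG1069])

theorem hasGraphG1069_map_intCast_iff {N : Matrix (Fin 7) (Fin 7) ℤ} :
    HasGraphG1069 (N.map (Int.cast : ℤ → ℂ)) ↔
      ∀ i j : Fin 7, i ≠ j → (N i j ≠ 0 ↔ s((i : ℕ) + 1, (j : ℕ) + 1) ∈ edgesG1069) := by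
  simp only [HasGraphG1069, map_apply, ne_eq, Int.cast_eq_zero]

def gramFactorG1069 : Matrix (Fin 4) (Fin 7) ℤ :=
  !![ 1,  1,  1, 1, 1, 0, 0;
     -1,  1,  1, 1, 0, 1, 0;
      1,  1,  0, 0, 0, 0, 1;
      0, -2, -1, 1, 0, 0, 0]

theorem rank_gramFactorG1069 : (gramFactorG1069.map (Int.cast : ℤ → ℂ)).rank = 4 := by
  have htri : ∀ i j : Fin 4, j < i → gramFactorG1069 i (![4, 5, 6, 1] j) = 0 := by decide
  have hdiag : ∀ i : Fin 4, gramFactorG1069 i (![4, 5, 6, 1] i) ≠ 0 := by decide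
  refine le_antisymm (rank_le_card_height _ |>.trans_eq (Fintype.card_fin 4)) ?_
  simpa using card_le_rank_of_isUpperTriangular_submatrix _ id ![4, 5, 6, 1]
    (fun i j hji ↦ by simp [htri i j hji]) (fun i ↦ by simpa using hdiag i)

theorem exists_posSemidef_hasGraphG1069_rank_eq_four :
    ∃ M : Matrix (Fin 7) (Fin 7) ℂ, M.PosSemidef ∧ HasGraphG1069 M ∧ M.rank = 4 := by
  set B := gramFactorG1069.map (Int.cast : ℤ → ℂ)
  refine ⟨Bᴴ * B, posSemidef_conjTranspose_mul_self B, ?_, ?_⟩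
  · rw [conjTranspose_map_intCast_mul_self, hasGraphG1069_map_intCast_iff]
    decide
  · rw [rank_conjTranspose_mul_self, rank_gramFactorG1069]

namespace HasGraphG1069

variable {M : Matrix (Fin 7) (Fin 7) ℂ}

theorem apply_ne_zero (hM : HasGraphG1069 M) {i j : Fin 7} (hij : i ≠ j)
    (h : s((i : ℕ) + 1, (j : ℕ) + 1) ∈ edgesG1069) : M i j ≠ 0 :=
  (hM i j hij).mpr h

theorem apply_eq_zero (hM : HasGraphG1069 M) {i j : Fin 7} (hij : i ≠ j)
    (h : s((i : ℕ) + 1, (j : ℕ) + 1) ∉ edgesG1069) : M i j = 0 :=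
  not_not.mp (mt (hM i j hij).mp h)

theorem four_le_rank (hG : HasGraphG1069 M) (hM : M.PosSemidef) : 4 ≤ M.rank := by
  let r : Fin 4 → Fin 7 := ![2, 1, 0, 6]
  let c : Fin 4 → Fin 7 := ![3, 2, 4, 6]
  have hbelow : ∀ i j, j < i →
      r i ≠ c j ∧ s((r i : ℕ) + 1, (c j : ℕ) + 1) ∉ edgesG1069 := by
    decide
  have hdiag : ∀ i, i ≠ 3 →
      r i ≠ c i ∧ s((r i : ℕ) + 1, (c i : ℕ) + 1) ∈ edgesG1069 := by
    decide
  have h66 : M 6 6 ≠ 0 :=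
    hM.diag_ne_zero_of_ne_zero (hG.apply_ne_zero (i := 0) (by decide) (by decide))
  simpa using card_le_rank_of_isUpperTriangular_submatrix M r c
    (fun i j hji ↦ hG.apply_eq_zero (hbelow i j hji).1 (hbelow i j hji).2) fun i ↦ by
      by_cases hi : i = 3
      · subst hi; exact h66
      · exact hG.apply_ne_zero (hdiag i hi).1 (hdiag i hi).2

end HasGraphG1069

/-- msr(G1069) = 4. -/
theorem msr_G1069 :
    (∃ M : Matrix (Fin 7) (Fin 7) ℂ, M.PosSemidef ∧ HasGraphG1069 M ∧ M.rank = 4) ∧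
    (∀ M : Matrix (Fin 7) (Fin 7) ℂ, M.PosSemidef → HasGraphG1069 M → 4 ≤ M.rank) :=
  ⟨exists_posSemidef_hasGraphG1069_rank_eq_four, fun _ hM hG ↦ hG.four_le_rank hM⟩
end

section
/- Let G be the simple graph on vertex set {1,...,7} with edge set E = {{1,2},{1,6},{1,7},{2,3},{2,4},{2,6},{2,7},{3,5},{3,6},{4,5},{4,6},{5,6},{5,7}} (the graph G1084 of the atlas). Then msr(G) = 4; that is, there exists a 7×7 Hermitian positive semidefinite complex matrix with graph G of rank 4, and every 7×7 Hermitian positive semidefinite complex matrix with graph G has rank at least 4. -/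
open Matrix ComplexOrder

/-- The edge set of the graph G1084 on vertices 1,...,7. -/
def edgesG1084 : Set (Sym2 ℕ) :=
  {s(1, 2), s(1, 6), s(1, 7), s(2, 3), s(2, 4), s(2, 6), s(2, 7), s(3, 5), s(3, 6), s(4, 5), s(4, 6), s(5, 6), s(5, 7)}

/-- `M` has graph G1084: for `i ≠ j`, `M i j ≠ 0` iff `{i+1, j+1}` is an edge of G1084. -/
def HasGraphG1084 (M : Matrix (Fin 7) (Fin 7) ℂ) : Prop :=
  ∀ i j : Fin 7, i ≠ j → (M i j ≠ 0 ↔ s((i : ℕ) + 1, (j : ℕ) + 1) ∈ edgesG1084)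

/-!
The lower bound comes from a nonsingular 4 × 4 submatrix: by the zero pattern of G1084, rows
1, 7, 4, 2 and columns 2, 5, 4, 3 of `M` (`rows` and `cols` below, indexed from 0) form a lower
triangular matrix whose diagonal entries `M₁₂, M₇₅, M₄₄, M₂₃` are nonzero; three of them are edge
entries, and `M₄₄ ≠ 0` because a positive semidefinite matrix with a zero diagonal entry has a zero
column, while `M₅₄ ≠ 0`. The upper bound is attained by the Gram matrix of seven vectors in `ℂ⁴`.
-/

namespace Matrix

variable {m n m₀ 𝕜 : Type*} [Fintype n]

theorem PosSemidef.apply_eq_zero_of_diag_eq_zero [RCLike 𝕜] [DecidableEq n]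
    {A : Matrix n n 𝕜} (hA : A.PosSemidef) {j : n} (hj : A j j = 0) (i : n) : A i j = 0 := by
  have hcol : A *ᵥ Pi.single j 1 = 0 :=
    (hA.dotProduct_mulVec_zero_iff _).mp (by simpa [dotProduct_single] using hj)
  simpa using congr_fun hcol i

theorem card_le_rank_of_det_submatrix_ne_zero_s5 [Field 𝕜] [Fintype m₀] [DecidableEq m₀]
    (A : Matrix m n 𝕜) (r : m₀ → m) (c : m₀ → n) (h : (A.submatrix r c).det ≠ 0) :
    Fintype.card m₀ ≤ A.rank :=
  calc Fintype.card m₀ = (A.submatrix r c).rank :=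
        (rank_of_isUnit _ ((isUnit_iff_isUnit_det _).mpr h.isUnit)).symm
    _ ≤ A.rank := rank_submatrix_le A r c

end Matrix

namespace G1084

def rows : Fin 4 → Fin 7 := ![0, 6, 3, 1]

def cols : Fin 4 → Fin 7 := ![1, 4, 3, 2]

def gramFactor : Matrix (Fin 4) (Fin 7) ℂ :=
  !![0, 1, 1, 0,  1, 1, 0;
     0, 1, 0, 1,  1, 1, 0;
     1, 1, 0, 0,  1, 1, 0;
     1, 3, 0, 0, -1, 0, 1]

def gram : Matrix (Fin 7) (Fin 7) ℂ :=
  !![2,  4, 0, 0,  0, 1,  1;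
     4, 12, 1, 1,  0, 3,  3;
     0,  1, 1, 0,  1, 1,  0;
     0,  1, 0, 1,  1, 1,  0;
     0,  0, 1, 1,  4, 3, -1;
     1,  3, 1, 1,  3, 3,  0;
     1,  3, 0, 0, -1, 0,  1]

theorem conjTranspose_gramFactor_mul_self : gramFactorᴴ * gramFactor = gram := by
  ext i j
  fin_cases i <;> fin_cases j <;>
    simp [gramFactor, gram, mul_apply, Fin.sum_univ_four, map_ofNat] <;> norm_num

theorem posSemidef_gram : gram.PosSemidef :=
  conjTranspose_gramFactor_mul_self ▸ posSemidef_conjTranspose_mul_self gramFactor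

theorem rank_gram_le : gram.rank ≤ 4 := by
  rw [← conjTranspose_gramFactor_mul_self, rank_conjTranspose_mul_self]
  simpa using rank_le_card_height gramFactor

theorem hasGraphG1084_gram : HasGraphG1084 gram := by
  intro i j hij
  fin_cases i <;> fin_cases j <;> simp [gram, edgesG1084] at hij ⊢

end G1084

namespace HasGraphG1084

open G1084

variable {M : Matrix (Fin 7) (Fin 7) ℂ}

theorem apply_eq_zero (hM : HasGraphG1084 M) {i j : Fin 7} (hij : i ≠ j)
    (h : s((i : ℕ) + 1, (j : ℕ) + 1) ∉ edgesG1084) : M i j = 0 :=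
  not_not.mp fun hne => h ((hM i j hij).mp hne)

theorem apply_ne_zero (hM : HasGraphG1084 M) {i j : Fin 7} (hij : i ≠ j)
    (h : s((i : ℕ) + 1, (j : ℕ) + 1) ∈ edgesG1084) : M i j ≠ 0 :=
  (hM i j hij).mpr h

theorem submatrix_isLowerTriangular (hM : HasGraphG1084 M) :
    (M.submatrix rows cols).IsLowerTriangular := by
  intro i j hij
  rw [OrderDual.toDual_lt_toDual] at hij
  fin_cases i <;> fin_cases j <;> first
    | exact absurd hij (by decide)
    | exact hM.apply_eq_zero (by decide) (by simp [edgesG1084, rows, cols])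

theorem det_submatrix_ne_zero (hP : M.PosSemidef) (hM : HasGraphG1084 M) :
    (M.submatrix rows cols).det ≠ 0 := by
  have h33 : M 3 3 ≠ 0 := fun h =>
    hM.apply_ne_zero (i := 4) (by decide) (by simp [edgesG1084])
      (hP.apply_eq_zero_of_diag_eq_zero h 4)
  have h01 : M 0 1 ≠ 0 := hM.apply_ne_zero (by decide) (by simp [edgesG1084])
  have h64 : M 6 4 ≠ 0 := hM.apply_ne_zero (by decide) (by simp [edgesG1084])
  have h12 : M 1 2 ≠ 0 := hM.apply_ne_zero (by decide) (by simp [edgesG1084])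
  rw [det_of_isLowerTriangular _ hM.submatrix_isLowerTriangular, Fin.prod_univ_four]
  exact mul_ne_zero (mul_ne_zero (mul_ne_zero h01 h64) h33) h12

theorem four_le_rank (hP : M.PosSemidef) (hM : HasGraphG1084 M) : 4 ≤ M.rank := by
  simpa using M.card_le_rank_of_det_submatrix_ne_zero_s5 rows cols (hM.det_submatrix_ne_zero hP)

end HasGraphG1084

/-- msr(G1084) = 4. -/
theorem msr_G1084 :
    (∃ M : Matrix (Fin 7) (Fin 7) ℂ, M.PosSemidef ∧ HasGraphG1084 M ∧ M.rank = 4) ∧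
    (∀ M : Matrix (Fin 7) (Fin 7) ℂ, M.PosSemidef → HasGraphG1084 M → 4 ≤ M.rank) := by
  open G1084 in
  refine ⟨⟨gram, posSemidef_gram, hasGraphG1084_gram, ?_⟩, fun M hP hM => hM.four_le_rank hP⟩
  exact le_antisymm rank_gram_le (hasGraphG1084_gram.four_le_rank posSemidef_gram)
end

section
/- Let G be the simple graph on vertex set {1,...,7} with edge set E = {{1,2},{1,5},{1,6},{1,7},{2,3},{2,5},{2,6},{2,7},{3,4},{3,5},{4,5},{4,6},{4,7}} (the graph G1092 of the atlas). Then msr(G) = 4; that is, there exists a 7×7 Hermitian positive semidefinite complex matrix with graph G of rank 4, and every 7×7 Hermitian positive semidefinite complex matrix with graph G has rank at least 4. -/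
open Matrix ComplexOrder

/-- The edge set of the graph G1092 on vertices 1,...,7. -/
def edgesG1092 : Set (Sym2 ℕ) :=
  {s(1, 2), s(1, 5), s(1, 6), s(1, 7), s(2, 3), s(2, 5), s(2, 6), s(2, 7), s(3, 4), s(3, 5), s(4, 5), s(4, 6), s(4, 7)}

/-- `M` has graph G1092: for `i ≠ j`, `M i j ≠ 0` iff `{i+1, j+1}` is an edge of G1092. -/
def HasGraphG1092 (M : Matrix (Fin 7) (Fin 7) ℂ) : Prop :=
  ∀ i j : Fin 7, i ≠ j → (M i j ≠ 0 ↔ s((i : ℕ) + 1, (j : ℕ) + 1) ∈ edgesG1092)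

/-!
Lean indexes vertex `v` of the graph as `v - 1 : Fin 7`.

Lower bound: the vertices 3, 5, 6, 7 induce the edge 35 plus two isolated vertices, so the
principal submatrix of `M` on them is block diagonal. The entries at 6 and 7 are nonzero
because these vertices have neighbours, and the 2 × 2 block at {3, 5} is nonsingular: otherwise
the Gram vectors of 3 and 5 would be parallel, whereas vertex 1 is orthogonal to 3 but not to 5.
Hence that principal submatrix is invertible and `rank M ≥ 4`.

Upper bound: `M = Bᴴ B` for an explicit integer 4 × 7 matrix `B`, whose columns form an
orthogonal representation of the graph in `ℂ⁴`.
-/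

namespace Matrix.PosSemidef

variable {𝕜 n : Type*} [RCLike 𝕜] [Fintype n] [DecidableEq n] {M : Matrix n n 𝕜}

theorem apply_eq_zero_of_diag_eq_zero_s7 (hM : M.PosSemidef) {j : n} (hj : M j j = 0) (i : n) :
    M i j = 0 := by
  have hq : star (Pi.single j 1) ⬝ᵥ M *ᵥ Pi.single j 1 = 0 := by
    simpa [mulVec_single_one] using hj
  simpa [mulVec_single_one] using congrFun ((hM.dotProduct_mulVec_zero_iff _).1 hq) i

theorem det_submatrix_pair_ne_zero_s7 (hM : M.PosSemidef) {i j k : n} (hij : M i j ≠ 0)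
    (hki : M k i = 0) (hkj : M k j ≠ 0) : (M.submatrix ![i, j] ![i, j]).det ≠ 0 := by
  have hji : M j i ≠ 0 := by
    rw [← hM.1.apply j i]
    exact star_ne_zero.2 hij
  intro hdet
  rw [det_fin_two] at hdet
  simp only [submatrix_apply, cons_val_zero, cons_val_one] at hdet
  -- `w` is a kernel vector of the singular 2 × 2 block, hence of `M`, but `(M *ᵥ w) k ≠ 0`.
  set w : n → 𝕜 := M j j • Pi.single i 1 - M j i • Pi.single j 1
  have hq : star w ⬝ᵥ M *ᵥ w = 0 := by
    have hjj : star (M j j) = M j j := hM.1.apply j j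
    have hji' : star (M j i) = M i j := hM.1.apply i j
    simp only [w, mulVec_sub, mulVec_smul, mulVec_single_one, star_sub, star_smul, Pi.star_single,
      star_one, dotProduct_sub, sub_dotProduct, dotProduct_smul, smul_dotProduct,
      single_one_dotProduct, col_apply, smul_eq_mul, hjj, hji']
    linear_combination M j j * hdet
  have hk := congrFun ((hM.dotProduct_mulVec_zero_iff w).1 hq) k
  simp only [w, mulVec_sub, mulVec_smul, mulVec_single_one, Pi.sub_apply, Pi.smul_apply,
    col_apply, hki, smul_eq_mul, mul_zero, zero_sub, Pi.zero_apply, neg_eq_zero] at hk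
  exact mul_ne_zero hji hkj hk

end Matrix.PosSemidef

theorem Matrix.det_fin_four_of_blocks {R : Type*} [CommRing R] (a b c d e f : R) :
    !![a, b, 0, 0; c, d, 0, 0; 0, 0, e, 0; 0, 0, 0, f].det = (a * d - b * c) * e * f := by
  simp [det_succ_row_zero, Fin.sum_univ_succ, Fin.succAbove]
  ring

instance : DecidablePred (· ∈ edgesG1092) := fun _ => by
  unfold edgesG1092
  infer_instance

namespace HasGraphG1092

variable {M : Matrix (Fin 7) (Fin 7) ℂ}

theorem apply_ne_zero (hG : HasGraphG1092 M) {i j : Fin 7} (hij : i ≠ j)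
    (h : s((i : ℕ) + 1, (j : ℕ) + 1) ∈ edgesG1092) : M i j ≠ 0 :=
  (hG i j hij).2 h

theorem apply_eq_zero (hG : HasGraphG1092 M) {i j : Fin 7} (hij : i ≠ j)
    (h : s((i : ℕ) + 1, (j : ℕ) + 1) ∉ edgesG1092) : M i j = 0 :=
  not_not.1 (mt (hG i j hij).1 h)

theorem four_le_rank (hM : M.PosSemidef) (hG : HasGraphG1092 M) : 4 ≤ M.rank := by
  have h04 : M 0 4 ≠ 0 := hG.apply_ne_zero (by decide) (by decide)
  have h05 : M 0 5 ≠ 0 := hG.apply_ne_zero (by decide) (by decide)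
  have h06 : M 0 6 ≠ 0 := hG.apply_ne_zero (by decide) (by decide)
  have h24 : M 2 4 ≠ 0 := hG.apply_ne_zero (by decide) (by decide)
  have h02 : M 0 2 = 0 := hG.apply_eq_zero (by decide) (by decide)
  have hS : M.submatrix ![2, 4, 5, 6] ![2, 4, 5, 6] =
      !![M 2 2, M 2 4, 0, 0; M 4 2, M 4 4, 0, 0; 0, 0, M 5 5, 0; 0, 0, 0, M 6 6] := by
    ext i j
    fin_cases i <;> fin_cases j <;> simp <;> exact hG.apply_eq_zero (by decide) (by decide)
  have hpair : M 2 2 * M 4 4 - M 2 4 * M 4 2 ≠ 0 := by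
    have h := hM.det_submatrix_pair_ne_zero_s7 h24 h02 h04
    rwa [det_fin_two] at h
  have h55 : M 5 5 ≠ 0 := fun h => h05 (hM.apply_eq_zero_of_diag_eq_zero_s7 h 0)
  have h66 : M 6 6 ≠ 0 := fun h => h06 (hM.apply_eq_zero_of_diag_eq_zero_s7 h 0)
  have hunit : IsUnit (M.submatrix ![2, 4, 5, 6] ![2, 4, 5, 6]) := by
    rw [isUnit_iff_isUnit_det, hS, det_fin_four_of_blocks, isUnit_iff_ne_zero]
    exact mul_ne_zero (mul_ne_zero hpair h55) h66
  calc 4 = (M.submatrix ![2, 4, 5, 6] ![2, 4, 5, 6]).rank := by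
        rw [rank_of_isUnit _ hunit, Fintype.card_fin]
    _ ≤ M.rank := rank_submatrix_le _ _ _

end HasGraphG1092

def gramFactorG1092 : Matrix (Fin 4) (Fin 7) ℤ :=
  !![1, 1, 0, 1, 0, 1, 0;
    -1, 1, 0, 1, 0, 0, 1;
     0, -2, 1, 1, 1, 0, 0;
     1, 1, 0, 0, 1, 0, 0]

theorem hasGraphG1092_map_intCast {N : Matrix (Fin 7) (Fin 7) ℤ}
    (hN : ∀ i j : Fin 7, i ≠ j → (N i j ≠ 0 ↔ s((i : ℕ) + 1, (j : ℕ) + 1) ∈ edgesG1092)) :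
    HasGraphG1092 (N.map (Int.castRingHom ℂ)) := by
  simpa [HasGraphG1092] using hN

theorem hasGraphG1092_gram :
    HasGraphG1092 ((gramFactorG1092.map (Int.castRingHom ℂ))ᴴ *
      gramFactorG1092.map (Int.castRingHom ℂ)) := by
  rw [← conjTranspose_map _ (fun _ => by simp), ← Matrix.map_mul]
  exact hasGraphG1092_map_intCast (by decide)

/-- msr(G1092) = 4. -/
theorem msr_G1092 :
    (∃ M : Matrix (Fin 7) (Fin 7) ℂ, M.PosSemidef ∧ HasGraphG1092 M ∧ M.rank = 4) ∧
    (∀ M : Matrix (Fin 7) (Fin 7) ℂ, M.PosSemidef → HasGraphG1092 M → 4 ≤ M.rank) := by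
  set B := gramFactorG1092.map (Int.castRingHom ℂ)
  have hB : (Bᴴ * B).PosSemidef := posSemidef_conjTranspose_mul_self B
  refine ⟨⟨Bᴴ * B, hB, hasGraphG1092_gram, le_antisymm ?_ (hasGraphG1092_gram.four_le_rank hB)⟩,
    fun M hM hG => hG.four_le_rank hM⟩
  calc (Bᴴ * B).rank = B.rank := rank_conjTranspose_mul_self B
    _ ≤ 4 := rank_le_height B
end

section
/- Let G be the simple graph on vertex set {1,...,7} with edge set E = {{1,2},{1,5},{1,7},{2,3},{2,5},{2,6},{3,4},{3,5},{3,6},{4,6},{4,7},{5,7},{6,7}} (the graph G1101 of the atlas). Then msr(G) = 4; that is, there exists a 7×7 Hermitian positive semidefinite complex matrix with graph G of rank 4, and every 7×7 Hermitian positive semidefinite complex matrix with graph G has rank at least 4. -/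
/-!
For the lower bound, the rows of vertices 2, 3, 6, 4 and the columns of vertices 1, 5, 2, 3 of a
matrix with graph G form a 4 × 4 submatrix which the zero pattern of G forces to be upper
triangular with nonzero diagonal, so the rank is at least 4. For the upper bound, the Gram matrix
`Aᴴ * A` of seven suitable vectors in ℂ⁴ (the columns of `A`) is positive semidefinite, has
graph G, and has rank at most 4.
-/

open Matrix ComplexOrder

/-- The edge set of the graph G1101 on vertices 1,...,7. -/
def edgesG1101 : Set (Sym2 ℕ) :=
  {s(1, 2), s(1, 5), s(1, 7), s(2, 3), s(2, 5), s(2, 6), s(3, 4), s(3, 5), s(3, 6), s(4, 6), s(4, 7), s(5, 7), s(6, 7)}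

/-- `M` has graph G1101: for `i ≠ j`, `M i j ≠ 0` iff `{i+1, j+1}` is an edge of G1101. -/
def HasGraphG1101 (M : Matrix (Fin 7) (Fin 7) ℂ) : Prop :=
  ∀ i j : Fin 7, i ≠ j → (M i j ≠ 0 ↔ s((i : ℕ) + 1, (j : ℕ) + 1) ∈ edgesG1101)

theorem Matrix.card_le_rank_of_submatrix_isUpperTriangular {k m n R : Type*} [Fintype k]
    [LinearOrder k] [Fintype n] [CommRing R] [IsDomain R] (A : Matrix m n R) (r : k → m)
    (c : k → n) (hA : (A.submatrix r c).IsUpperTriangular) (hd : ∀ i, A (r i) (c i) ≠ 0) :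
    Fintype.card k ≤ A.rank := by
  have hdet : (A.submatrix r c).det ≠ 0 := by
    simpa [det_of_isUpperTriangular hA, Finset.prod_ne_zero_iff] using hd
  exact (rank_of_det_ne_zero hdet).symm.le.trans (rank_submatrix_le A r c)

namespace HasGraphG1101

variable {M : Matrix (Fin 7) (Fin 7) ℂ}

theorem apply_eq_zero (hM : HasGraphG1101 M) {i j : Fin 7} (hij : i ≠ j)
    (he : s((i : ℕ) + 1, (j : ℕ) + 1) ∉ edgesG1101) : M i j = 0 :=
  not_not.mp fun h => he ((hM i j hij).mp h)

theorem four_le_rank (hM : HasGraphG1101 M) : 4 ≤ M.rank := by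
  have := M.card_le_rank_of_submatrix_isUpperTriangular ![1, 2, 5, 3] ![0, 4, 1, 2] ?_ ?_
  · simpa using this
  · intro i j hji
    fin_cases i <;> fin_cases j <;> simp at hji ⊢ <;>
      exact hM.apply_eq_zero (by decide) (by simp [edgesG1101])
  · intro i
    fin_cases i <;> exact (hM _ _ (by decide)).mpr (by simp [edgesG1101])

end HasGraphG1101

def factorG1101 : Matrix (Fin 4) (Fin 7) ℂ :=
  !![1, 1, 0, 0, 1, 0, -1; 0, 0, 1, 1, 0, 1, 1; 0, 1, 1, 0, 0, 1, 1; 0, 0, 1, 0, 1, 0, -2]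

theorem hasGraphG1101_conjTranspose_mul_self_factorG1101 :
    HasGraphG1101 (factorG1101ᴴ * factorG1101) := by
  intro i j hij
  fin_cases i <;> fin_cases j <;> first
    | exact absurd rfl hij
    | norm_num [factorG1101, mul_apply, Fin.sum_univ_succ, edgesG1101, map_ofNat]

/-- msr(G1101) = 4. -/
theorem msr_G1101 :
    (∃ M : Matrix (Fin 7) (Fin 7) ℂ, M.PosSemidef ∧ HasGraphG1101 M ∧ M.rank = 4) ∧
    (∀ M : Matrix (Fin 7) (Fin 7) ℂ, M.PosSemidef → HasGraphG1101 M → 4 ≤ M.rank) := by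
  have hGraph := hasGraphG1101_conjTranspose_mul_self_factorG1101
  refine ⟨⟨factorG1101ᴴ * factorG1101, posSemidef_conjTranspose_mul_self _, hGraph, ?_⟩,
    fun M _ hM => hM.four_le_rank⟩
  exact le_antisymm ((rank_mul_le_right _ _).trans (rank_le_height _)) hGraph.four_le_rank
end

section
/- Let G be the simple graph on vertex set {1,...,7} with edge set E = {{1,2},{1,6},{1,7},{2,3},{2,6},{2,7},{3,4},{3,5},{3,6},{3,7},{4,5},{4,7},{5,6},{6,7}} (the graph G1145 of the atlas). Then msr(G) = 4; that is, there exists a 7×7 Hermitian positive semidefinite complex matrix with graph G of rank 4, and every 7×7 Hermitian positive semidefinite complex matrix with graph G has rank at least 4. -/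
/-!
Lower bound: rows 7, 6, 2, 1 and columns 4, 5, 3, 6 of any matrix with graph G1145 form an upper
triangular 4 × 4 submatrix whose diagonal entries sit on the edges {4,7}, {5,6}, {2,3}, {1,6},
so its determinant is nonzero. Upper bound: the Gram matrix of the seven columns of an explicit
integer 4 × 7 matrix has graph G1145.
-/

open Matrix ComplexOrder

/-- The edge set of the graph G1145 on vertices 1,...,7. -/
def edgesG1145 : Set (Sym2 ℕ) :=
  {s(1, 2), s(1, 6), s(1, 7), s(2, 3), s(2, 6), s(2, 7), s(3, 4), s(3, 5), s(3, 6), s(3, 7), s(4, 5), s(4, 7), s(5, 6), s(6, 7)}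

/-- `M` has graph G1145: for `i ≠ j`, `M i j ≠ 0` iff `{i+1, j+1}` is an edge of G1145. -/
def HasGraphG1145 (M : Matrix (Fin 7) (Fin 7) ℂ) : Prop :=
  ∀ i j : Fin 7, i ≠ j → (M i j ≠ 0 ↔ s((i : ℕ) + 1, (j : ℕ) + 1) ∈ edgesG1145)

namespace Matrix

variable {m n : Type*}

theorem card_le_rank_of_isUpperTriangular_submatrix_s10 [Fintype n] {k R : Type*} [Fintype k]
    [LinearOrder k] [CommRing R] [IsDomain R] (A : Matrix m n R) (r : k → m) (c : k → n)
    (hA : (A.submatrix r c).IsUpperTriangular) (hd : ∀ i, A (r i) (c i) ≠ 0) :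
    Fintype.card k ≤ A.rank := by
  have hdet : (A.submatrix r c).det ≠ 0 := by
    rw [det_of_isUpperTriangular hA]
    exact Finset.prod_ne_zero_iff.mpr fun i _ => hd i
  calc Fintype.card k = (A.submatrix r c).rank := (rank_of_det_ne_zero hdet).symm
    _ ≤ A.rank := rank_submatrix_le A r c

theorem posSemidef_map_intCast_transpose_mul_self [Fintype m] [Finite n] {𝕜 : Type*} [RCLike 𝕜]
    (A : Matrix m n ℤ) : ((Aᵀ * A).map (Int.cast : ℤ → 𝕜)).PosSemidef := by
  have hstar : (A.map (Int.castRingHom 𝕜))ᴴ = Aᵀ.map (Int.castRingHom 𝕜) := by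
    ext i j
    simp
  have h := posSemidef_conjTranspose_mul_self (A.map (Int.castRingHom 𝕜))
  rwa [hstar, ← Matrix.map_mul] at h

theorem rank_map_intCast_transpose_mul_self_le [Fintype n] {r : ℕ} {K : Type*} [Field K]
    (A : Matrix (Fin r) n ℤ) : ((Aᵀ * A).map (Int.cast : ℤ → K)).rank ≤ r := by
  have h := rank_mul_le_right (Aᵀ.map (Int.castRingHom K)) (A.map (Int.castRingHom K))
  rw [← Matrix.map_mul] at h
  exact h.trans ((rank_le_card_height _).trans_eq (Fintype.card_fin r))

end Matrix

instance : DecidablePred (· ∈ edgesG1145) := fun e =>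
  decidable_of_iff (e ∈ ({s(1, 2), s(1, 6), s(1, 7), s(2, 3), s(2, 6), s(2, 7), s(3, 4), s(3, 5),
    s(3, 6), s(3, 7), s(4, 5), s(4, 7), s(5, 6), s(6, 7)} : Finset (Sym2 ℕ))) (by simp [edgesG1145])

theorem hasGraphG1145_map_intCast_iff (N : Matrix (Fin 7) (Fin 7) ℤ) :
    HasGraphG1145 (N.map (↑)) ↔
      ∀ i j : Fin 7, i ≠ j → (N i j ≠ 0 ↔ s((i : ℕ) + 1, (j : ℕ) + 1) ∈ edgesG1145) := by
  simp only [HasGraphG1145, map_apply, ne_eq, Int.cast_eq_zero]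

namespace HasGraphG1145

variable {M : Matrix (Fin 7) (Fin 7) ℂ} {i j : Fin 7}

theorem apply_eq_zero (hM : HasGraphG1145 M) (hij : i ≠ j)
    (h : s((i : ℕ) + 1, (j : ℕ) + 1) ∉ edgesG1145) : M i j = 0 :=
  not_ne_iff.mp (mt (hM i j hij).mp h)

theorem apply_ne_zero (hM : HasGraphG1145 M) (hij : i ≠ j)
    (h : s((i : ℕ) + 1, (j : ℕ) + 1) ∈ edgesG1145) : M i j ≠ 0 :=
  (hM i j hij).mpr h

theorem four_le_rank (hM : HasGraphG1145 M) : 4 ≤ M.rank := by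
  refine M.card_le_rank_of_isUpperTriangular_submatrix_s10 ![6, 5, 1, 0] ![3, 4, 2, 5] ?_ ?_
  · intro a b hba
    fin_cases a <;> fin_cases b <;> first
      | exact absurd hba (by decide)
      | exact hM.apply_eq_zero (by decide) (by decide)
  · intro a
    fin_cases a <;> exact hM.apply_ne_zero (by decide) (by decide)

end HasGraphG1145

def gramFactorG1145 : Matrix (Fin 4) (Fin 7) ℤ :=
  !![1, 1, 0, 0, 0, 1, 1; 0, 0, 1, 1, 1, 0, 1; 0, 0, 0, 0, 1, 1, -1; 0, 1, 1, 0, 0, 1, 1]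

theorem hasGraphG1145_gram : HasGraphG1145 ((gramFactorG1145ᵀ * gramFactorG1145).map (↑)) :=
  (hasGraphG1145_map_intCast_iff _).mpr (by decide)

/-- msr(G1145) = 4. -/
theorem msr_G1145 :
    (∃ M : Matrix (Fin 7) (Fin 7) ℂ, M.PosSemidef ∧ HasGraphG1145 M ∧ M.rank = 4) ∧
    (∀ M : Matrix (Fin 7) (Fin 7) ℂ, M.PosSemidef → HasGraphG1145 M → 4 ≤ M.rank) :=
  ⟨⟨_, posSemidef_map_intCast_transpose_mul_self gramFactorG1145, hasGraphG1145_gram,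
      (rank_map_intCast_transpose_mul_self_le gramFactorG1145).antisymm
        hasGraphG1145_gram.four_le_rank⟩,
    fun _ _ hM => hM.four_le_rank⟩
end

section
/- Let G be the simple graph on vertex set {1,...,7} with edge set E = {{1,2},{1,4},{1,7},{2,3},{2,4},{2,5},{2,6},{2,7},{3,4},{3,5},{3,6},{3,7},{4,5},{4,6},{5,7},{6,7}} (the graph G1224 of the atlas). Then msr(G) = 3; that is, there exists a 7×7 Hermitian positive semidefinite complex matrix with graph G of rank 3, and every 7×7 Hermitian positive semidefinite complex matrix with graph G has rank at least 3. -/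
/-!
Lower bound: vertices 1, 5, 6 (indices 0, 4, 5 in `Fin 7`) are pairwise non-adjacent and each
is adjacent to 2. In a positive semidefinite matrix a zero diagonal entry forces its whole row to
vanish, so the principal submatrix on these three vertices is diagonal with nonzero diagonal, and
has rank 3.

Upper bound: the Gram matrix `A Aᴴ` of the seven rows of an explicit integer `7 × 3` matrix `A`
has graph G1224.
-/

open Matrix ComplexOrder

/-- The edge set of the graph G1224 on vertices 1,...,7. -/
def edgesG1224 : Set (Sym2 ℕ) :=
  {s(1, 2), s(1, 4), s(1, 7), s(2, 3), s(2, 4), s(2, 5), s(2, 6), s(2, 7), s(3, 4), s(3, 5), s(3, 6), s(3, 7), s(4, 5), s(4, 6), s(5, 7), s(6, 7)}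

/-- `M` has graph G1224: for `i ≠ j`, `M i j ≠ 0` iff `{i+1, j+1}` is an edge of G1224. -/
def HasGraphG1224 (M : Matrix (Fin 7) (Fin 7) ℂ) : Prop :=
  ∀ i j : Fin 7, i ≠ j → (M i j ≠ 0 ↔ s((i : ℕ) + 1, (j : ℕ) + 1) ∈ edgesG1224)

namespace Matrix

variable {n 𝕜 : Type*} [Fintype n] [RCLike 𝕜]

theorem PosSemidef.apply_eq_zero_of_diag_eq_zero_s13 {M : Matrix n n 𝕜} (hM : M.PosSemidef) {i : n}
    (hii : M i i = 0) (j : n) : M i j = 0 := by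
  classical
  have hquad : star (Pi.single i 1 : n → 𝕜) ⬝ᵥ M *ᵥ Pi.single i 1 = 0 := by
    simp [mulVec_single, dotProduct, Pi.single_apply, hii]
  have hcol : M j i = 0 := by
    simpa [mulVec_single] using congrFun ((hM.dotProduct_mulVec_zero_iff _).mp hquad) j
  rw [← hM.isHermitian.apply i j, hcol, star_zero]

theorem PosSemidef.card_le_rank_of_pairwise_apply_eq_zero {m : Type*} [Fintype m]
    {M : Matrix n n 𝕜} (hM : M.PosSemidef) (v : m → n)
    (hindep : Pairwise fun a b ↦ M (v a) (v b) = 0) (hnbr : ∀ a, ∃ j, M (v a) j ≠ 0) :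
    Fintype.card m ≤ M.rank := by
  classical
  have hdiag : M.submatrix v v = diagonal fun a ↦ M (v a) (v a) := by
    ext a b
    by_cases hab : a = b
    · simp [hab]
    · simp [hab, hindep hab]
  have hdiag_ne : ∀ a, M (v a) (v a) ≠ 0 := fun a hzero ↦
    (hnbr a).elim fun j hj ↦ hj (hM.apply_eq_zero_of_diag_eq_zero_s13 hzero j)
  calc Fintype.card m = (M.submatrix v v).rank := by
        simp [hdiag, rank_diagonal, hdiag_ne]
    _ ≤ M.rank := rank_submatrix_le M v v

theorem map_intCast_mul_transpose {m R : Type*} [Ring R] [StarRing R] (A : Matrix m n ℤ) :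
    (A * Aᵀ).map (Int.cast : ℤ → R) = A.map Int.cast * (A.map Int.cast)ᴴ := by
  rw [← conjTranspose_map _ fun z ↦ (star_intCast z).symm, conjTranspose_eq_transpose_of_trivial]
  exact Matrix.map_mul (f := Int.castRingHom R)

end Matrix

def edgeFinsetG1224 : Finset (Sym2 ℕ) :=
  {s(1, 2), s(1, 4), s(1, 7), s(2, 3), s(2, 4), s(2, 5), s(2, 6), s(2, 7), s(3, 4), s(3, 5),
    s(3, 6), s(3, 7), s(4, 5), s(4, 6), s(5, 7), s(6, 7)}

theorem hasGraphG1224_iff {M : Matrix (Fin 7) (Fin 7) ℂ} : HasGraphG1224 M ↔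
    ∀ i j : Fin 7, i ≠ j → (M i j ≠ 0 ↔ s((i : ℕ) + 1, (j : ℕ) + 1) ∈ edgeFinsetG1224) := by
  have hedges : (edgeFinsetG1224 : Set (Sym2 ℕ)) = edgesG1224 := by
    simp [edgeFinsetG1224, edgesG1224]
  simp only [HasGraphG1224, ← hedges, Finset.mem_coe]

theorem HasGraphG1224.three_le_rank {M : Matrix (Fin 7) (Fin 7) ℂ} (hM : M.PosSemidef)
    (hG : HasGraphG1224 M) : 3 ≤ M.rank := by
  rw [hasGraphG1224_iff] at hG
  let v : Fin 3 → Fin 7 := ![0, 4, 5]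
  have hindep : ∀ a b, a ≠ b → v a ≠ v b ∧
      s((v a : ℕ) + 1, (v b : ℕ) + 1) ∉ edgeFinsetG1224 := by decide
  have hnbr : ∀ a, v a ≠ 1 ∧ s((v a : ℕ) + 1, 2) ∈ edgeFinsetG1224 := by decide
  simpa using hM.card_le_rank_of_pairwise_apply_eq_zero v
    (fun a b hab ↦ not_not.mp fun h ↦ (hindep a b hab).2 ((hG _ _ (hindep a b hab).1).mp h))
    (fun a ↦ ⟨1, (hG _ _ (hnbr a).1).mpr (hnbr a).2⟩)

def gramFactorG1224 : Matrix (Fin 7) (Fin 3) ℤ :=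
  !![1, 0, 0; 1, 1, 2; 0, 1, 1; 1, 2, 1; 0, 1, 0; 0, 0, 1; 1, 1, -3]

theorem hasGraphG1224_gram :
    HasGraphG1224 ((gramFactorG1224 * gramFactorG1224ᵀ).map (Int.cast : ℤ → ℂ)) := by
  simp only [hasGraphG1224_iff, map_apply, ne_eq, Int.cast_eq_zero]
  decide

/-- msr(G1224) = 3. -/
theorem msr_G1224 :
    (∃ M : Matrix (Fin 7) (Fin 7) ℂ, M.PosSemidef ∧ HasGraphG1224 M ∧ M.rank = 3) ∧
    (∀ M : Matrix (Fin 7) (Fin 7) ℂ, M.PosSemidef → HasGraphG1224 M → 3 ≤ M.rank) := by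
  set A := gramFactorG1224.map (Int.cast : ℤ → ℂ)
  have hgram : (gramFactorG1224 * gramFactorG1224ᵀ).map Int.cast = A * Aᴴ :=
    map_intCast_mul_transpose _
  have hpsd : (A * Aᴴ).PosSemidef := posSemidef_self_mul_conjTranspose A
  have hgraph : HasGraphG1224 (A * Aᴴ) := hgram ▸ hasGraphG1224_gram
  have hrank_le : (A * Aᴴ).rank ≤ 3 :=
    calc (A * Aᴴ).rank ≤ A.rank := rank_mul_le_left _ _
      _ ≤ 3 := by simpa using A.rank_le_card_width
  exact ⟨⟨A * Aᴴ, hpsd, hgraph, hrank_le.antisymm (hgraph.three_le_rank hpsd)⟩,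
    fun _ ↦ HasGraphG1224.three_le_rank⟩
end

section
/- Let G be the simple graph on vertex set {1,...,7} with edge set E = {{1,2},{1,4},{1,5},{1,6},{1,7},{2,3},{2,5},{2,6},{3,4},{3,5},{3,6},{3,7},{4,5},{4,7},{5,6},{6,7}} (the graph G1231 of the atlas). Then msr(G) = 3; that is, there exists a 7×7 Hermitian positive semidefinite complex matrix with graph G of rank 3, and every 7×7 Hermitian positive semidefinite complex matrix with graph G has rank at least 3. -/
/-!
Rank at least 3: rows 2, 5, 6 and columns 5, 4, 7 of any matrix with graph G1231 form a lower
triangular submatrix whose diagonal entries sit on the edges {2,5}, {5,4}, {6,7}, while the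
entries above the diagonal sit on the non-edges {2,4}, {2,7}, {5,7}.

Rank 3 is attained by the Gram matrix of seven integer vectors in ℤ³ whose pairwise dot products
vanish exactly on the non-edges of G1231.
-/

open Matrix ComplexOrder

/-- The edge set of the graph G1231 on vertices 1,...,7. -/
def edgesG1231 : Set (Sym2 ℕ) :=
  {s(1, 2), s(1, 4), s(1, 5), s(1, 6), s(1, 7), s(2, 3), s(2, 5), s(2, 6), s(3, 4), s(3, 5), s(3, 6), s(3, 7), s(4, 5), s(4, 7), s(5, 6), s(6, 7)}

/-- `M` has graph G1231: for `i ≠ j`, `M i j ≠ 0` iff `{i+1, j+1}` is an edge of G1231. -/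
def HasGraphG1231 (M : Matrix (Fin 7) (Fin 7) ℂ) : Prop :=
  ∀ i j : Fin 7, i ≠ j → (M i j ≠ 0 ↔ s((i : ℕ) + 1, (j : ℕ) + 1) ∈ edgesG1231)

namespace Matrix

variable {m n R : Type*}

theorem le_rank_of_submatrix_isLowerTriangular [Fintype n] [CommRing R] [IsDomain R] {k : ℕ}
    (A : Matrix m n R) (r : Fin k → m) (c : Fin k → n)
    (hA : (A.submatrix r c).IsLowerTriangular) (hd : ∀ i, A (r i) (c i) ≠ 0) : k ≤ A.rank := by
  have hdet : (A.submatrix r c).det ≠ 0 := by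
    rw [det_of_isLowerTriangular _ hA]
    exact Finset.prod_ne_zero_iff.mpr fun i _ => hd i
  simpa [rank_of_det_ne_zero hdet] using rank_submatrix_le A r c

theorem map_intCast_transpose_mul_self [Fintype m] (A : Matrix m n ℤ) :
    (Aᵀ * A).map (Int.cast : ℤ → ℂ) =
      (A.map (Int.cast : ℤ → ℂ))ᴴ * A.map (Int.cast : ℤ → ℂ) := by
  ext i j
  simp [mul_apply]

end Matrix

namespace HasGraphG1231

variable {M : Matrix (Fin 7) (Fin 7) ℂ} {i j : Fin 7}

theorem apply_ne_zero (hM : HasGraphG1231 M) (hij : i ≠ j)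
    (he : s((i : ℕ) + 1, (j : ℕ) + 1) ∈ edgesG1231) : M i j ≠ 0 :=
  (hM i j hij).mpr he

theorem apply_eq_zero (hM : HasGraphG1231 M) (hij : i ≠ j)
    (he : s((i : ℕ) + 1, (j : ℕ) + 1) ∉ edgesG1231) : M i j = 0 :=
  not_not.mp (mt (hM i j hij).mp he)

theorem three_le_rank (hM : HasGraphG1231 M) : 3 ≤ M.rank := by
  refine M.le_rank_of_submatrix_isLowerTriangular ![1, 4, 5] ![4, 3, 6] ?_ ?_
  · have h13 : M 1 3 = 0 := hM.apply_eq_zero (by decide) (by simp [edgesG1231])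
    have h16 : M 1 6 = 0 := hM.apply_eq_zero (by decide) (by simp [edgesG1231])
    have h46 : M 4 6 = 0 := hM.apply_eq_zero (by decide) (by simp [edgesG1231])
    intro i j hij
    rw [OrderDual.toDual_lt_toDual] at hij
    fin_cases i <;> fin_cases j <;> first | exact absurd hij (by decide) | simpa
  · intro i
    fin_cases i <;> exact hM.apply_ne_zero (by decide) (by simp [edgesG1231])

end HasGraphG1231

/-- Column `i` is the vector assigned to vertex `i + 1`. -/
def orthogonalRepG1231 : Matrix (Fin 3) (Fin 7) ℤ :=
  !![1, 1, 0, 1, 2, 2, 1; 0, 1, 1, 0, 2, 1, -1; 0, 1, 1, -1, 1, 2, 0]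

theorem hasGraphG1231_gram :
    HasGraphG1231 ((orthogonalRepG1231.map (Int.cast : ℤ → ℂ))ᴴ *
      orthogonalRepG1231.map (Int.cast : ℤ → ℂ)) := by
  rw [← map_intCast_transpose_mul_self]
  intro i j hij
  simp only [map_apply, ne_eq, Int.cast_eq_zero, edgesG1231, Set.mem_insert_iff,
    Set.mem_singleton_iff]
  fin_cases i <;> fin_cases j <;> first | exact absurd rfl hij | decide

/-- msr(G1231) = 3. -/
theorem msr_G1231 :
    (∃ M : Matrix (Fin 7) (Fin 7) ℂ, M.PosSemidef ∧ HasGraphG1231 M ∧ M.rank = 3) ∧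
    (∀ M : Matrix (Fin 7) (Fin 7) ℂ, M.PosSemidef → HasGraphG1231 M → 3 ≤ M.rank) := by
  set A := orthogonalRepG1231.map (Int.cast : ℤ → ℂ)
  have hrank : (Aᴴ * A).rank ≤ 3 := by
    simpa [rank_conjTranspose_mul_self] using A.rank_le_card_height
  exact ⟨⟨Aᴴ * A, posSemidef_conjTranspose_mul_self A, hasGraphG1231_gram,
    le_antisymm hrank hasGraphG1231_gram.three_le_rank⟩,
    fun _ _ hM => hM.three_le_rank⟩
end
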